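/- The identity ψ(q) := ∑_{n=0}^∞ q^{n(n+1)/2} = (q^2;q^2)_∞^2 / (q;q)_∞ for |q| < 1. -/

import Mathlib

/-!
Since `(q;q)_∞ (-q;q)_∞ = (q²;q²)_∞`, the identity is Gauss's `ψ(q) = (q;q)_∞ (-q;q)_∞²`.
Evaluate the q-binomial theorem `∏_{k<2n} (1 + z q^k) = ∑_m [2n, m]_q q^(m(m-1)/2) z^m`
at `z = q^(-n)` and multiply by `q^(n(n+1)/2)`: the product becomes `(-q;q)_n (-1;q)_n`,
and the terms of index `m = n - j` and `m = n + 1 + j` become `[2n, m]_q q^(j(j+1)/2)`.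
As `n → ∞` the central Gaussian binomials tend to `1 / (q;q)_∞`, and all of them satisfy
`|[N, m]_q| ≤ [N, m]_|q| ≤ 1 / (|q|;|q|)_∞²`, so by Tannery's theorem the sum side tends
to `2 ψ(q) / (q;q)_∞` while the product side tends to `2 (-q;q)_∞²`.
-/

open scoped Topology

/-- The infinite q-Pochhammer symbol `(a; q)_∞ = ∏_{n=0}^∞ (1 - a q^n)`. -/
noncomputable def qPoch (a q : ℂ) : ℂ := ∏' n : ℕ, (1 - a * q ^ n)

/-- The Rogers–Ramanujan continued fraction in product form. -/
noncomputable def RR (q : ℂ) : ℂ :=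
  qPoch q (q ^ 5) * qPoch (q ^ 4) (q ^ 5) / (qPoch (q ^ 2) (q ^ 5) * qPoch (q ^ 3) (q ^ 5))

open Finset Filter

lemma succ_choose_two (m : ℕ) : (m + 1).choose 2 = m.choose 2 + m := by
  rw [Nat.choose_succ_succ', Nat.choose_one_right, add_comm]

lemma sum_range_add_one_eq_choose_two (n : ℕ) :
    ∑ k ∈ range n, (k + 1) = (n + 1).choose 2 := by
  induction n with
  | zero => rfl
  | succ n ih => rw [sum_range_succ, ih, succ_choose_two (n + 1)]

section CommSemiring

variable {R : Type*} [CommSemiring R]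

def qBinom (q : R) : ℕ → ℕ → R
  | _, 0 => 1
  | 0, _ + 1 => 0
  | N + 1, m + 1 => q ^ (m + 1) * qBinom q N (m + 1) + qBinom q N m

variable (q : R)

@[simp] lemma qBinom_zero_right (N : ℕ) : qBinom q N 0 = 1 := by
  cases N <;> rfl

@[simp] lemma qBinom_zero_succ (m : ℕ) : qBinom q 0 (m + 1) = 0 := rfl

lemma qBinom_succ_succ (N m : ℕ) :
    qBinom q (N + 1) (m + 1) = q ^ (m + 1) * qBinom q N (m + 1) + qBinom q N m := rfl

lemma qBinom_eq_zero_of_lt {N m : ℕ} (h : N < m) : qBinom q N m = 0 := by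
  induction N generalizing m with
  | zero => obtain ⟨m, rfl⟩ := Nat.exists_eq_add_of_lt h; rfl
  | succ N ih =>
    obtain ⟨m, rfl⟩ := Nat.exists_eq_succ_of_ne_zero (by omega : m ≠ 0)
    rw [qBinom_succ_succ, ih (by omega), ih (by omega), mul_zero, add_zero]

theorem prod_one_add_mul_pow_eq_sum_qBinom (z : R) (N : ℕ) :
    ∏ k ∈ range N, (1 + z * q ^ k) =
      ∑ m ∈ range (N + 1), qBinom q N m * q ^ m.choose 2 * z ^ m := by
  induction N generalizing z with
  | zero => simp
  | succ N ih =>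
    have hshift :
        ∏ k ∈ range N, (1 + z * q ^ (k + 1)) = ∏ k ∈ range N, (1 + z * q * q ^ k) :=
      prod_congr rfl fun k _ => by ring
    have hfirst :
        ∑ m ∈ range (N + 1), q ^ (m + 1) * qBinom q N (m + 1) * q ^ (m + 1).choose 2
          * z ^ (m + 1) + 1 =
        ∑ m ∈ range (N + 1), qBinom q N m * q ^ m.choose 2 * (z * q) ^ m := by
      rw [sum_range_succ, qBinom_eq_zero_of_lt q (Nat.lt_succ_self N), sum_range_succ' _ N]
      simp only [succ_choose_two, mul_zero, zero_mul, add_zero, qBinom_zero_right,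
        Nat.choose_zero_succ, pow_zero, one_mul]
      refine congrArg (· + 1) (sum_congr rfl fun m _ => ?_)
      ring
    have hsecond : ∑ m ∈ range (N + 1), qBinom q N m * q ^ (m + 1).choose 2 * z ^ (m + 1) =
        z * ∑ m ∈ range (N + 1), qBinom q N m * q ^ m.choose 2 * (z * q) ^ m := by
      rw [mul_sum]
      refine sum_congr rfl fun m _ => ?_
      rw [succ_choose_two]
      ring
    rw [prod_range_succ', hshift, ih, sum_range_succ' _ (N + 1)]
    simp only [qBinom_succ_succ, add_mul, sum_add_distrib, qBinom_zero_right,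
      Nat.choose_zero_succ, pow_zero, mul_one]
    rw [add_right_comm, hfirst, hsecond]
    ring

end CommSemiring

section CommRing

variable {R : Type*} [CommRing R]

def qPochPartial (a q : R) (m : ℕ) : R := ∏ k ∈ range m, (1 - a * q ^ k)

@[simp] lemma qPochPartial_zero (a q : R) : qPochPartial a q 0 = 1 := prod_range_zero _

lemma qPochPartial_succ (a q : R) (m : ℕ) :
    qPochPartial a q (m + 1) = qPochPartial a q m * (1 - a * q ^ m) :=
  prod_range_succ _ _

lemma qBinom_mul_qPochPartial (q : R) {N m : ℕ} (h : m ≤ N) :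
    qBinom q N m * (qPochPartial q q m * qPochPartial q q (N - m)) = qPochPartial q q N := by
  induction N generalizing m with
  | zero =>
    obtain rfl : m = 0 := by omega
    simp
  | succ N ih =>
    rcases m with _ | m
    · simp
    rcases Nat.lt_or_ge m N with hm | hm
    · obtain ⟨d, rfl⟩ := Nat.exists_eq_add_of_lt hm
      have e1 := ih (m := m + 1) (by omega)
      have e2 := ih (m := m) (by omega)
      rw [show m + d + 1 - (m + 1) = d by omega] at e1
      rw [show m + d + 1 - m = d + 1 by omega, qPochPartial_succ] at e2
      rw [show m + d + 1 + 1 - (m + 1) = d + 1 by omega, qBinom_succ_succ, qPochPartial_succ,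
        qPochPartial_succ q q (m + d + 1), qPochPartial_succ q q d]
      rw [qPochPartial_succ] at e1
      linear_combination q ^ (m + 1) * (1 - q * q ^ d) * e1 + (1 - q * q ^ m) * e2
    · obtain rfl : m = N := by omega
      have e := ih (m := m) le_rfl
      rw [Nat.sub_self, qPochPartial_zero, mul_one] at e
      rw [qBinom_succ_succ, qBinom_eq_zero_of_lt q (Nat.lt_succ_self m), Nat.sub_self,
        qPochPartial_zero, mul_one, mul_zero, zero_add, qPochPartial_succ]
      linear_combination (1 - q * q ^ m) * e

end CommRing

section Field

variable {K : Type*} [Field K] {q : K}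

lemma pow_choose_two_mul_prod_range_two_mul (hq : q ≠ 0) (n : ℕ) :
    q ^ (n + 1).choose 2 * ∏ k ∈ range (2 * n), (1 + q⁻¹ ^ n * q ^ k) =
      qPochPartial (-q) q n * qPochPartial (-1) q n := by
  have hinv : q⁻¹ ^ n * q ^ n = 1 := by rw [← mul_pow, inv_mul_cancel₀ hq, one_pow]
  have hlow : q ^ (n + 1).choose 2 * ∏ k ∈ range n, (1 + q⁻¹ ^ n * q ^ k) =
      qPochPartial (-q) q n := by
    rw [← sum_range_add_one_eq_choose_two, ← prod_pow_eq_pow_sum,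
      ← prod_range_reflect (fun k => 1 + q⁻¹ ^ n * q ^ k), ← prod_mul_distrib]
    refine prod_congr rfl fun k hk => ?_
    have hk : q ^ (k + 1) * q ^ (n - 1 - k) = q ^ n := by
      rw [← pow_add]
      congr 1
      have := mem_range.1 hk
      omega
    linear_combination q⁻¹ ^ n * hk + hinv
  have hhigh : ∏ k ∈ range n, (1 + q⁻¹ ^ n * q ^ (n + k)) = qPochPartial (-1) q n :=
    prod_congr rfl fun k _ => by linear_combination q ^ k * hinv
  rw [two_mul, prod_range_add, ← mul_assoc, hlow, hhigh]

lemma pow_choose_two_mul_sum_range_two_mul (hq : q ≠ 0) (n : ℕ) :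
    q ^ (n + 1).choose 2 *
        ∑ m ∈ range (2 * n + 1), qBinom q (2 * n) m * q ^ m.choose 2 * (q⁻¹ ^ n) ^ m =
      ∑ j ∈ range (n + 1), qBinom q (2 * n) (n - j) * q ^ (j + 1).choose 2
        + ∑ j ∈ range n, qBinom q (2 * n) (n + 1 + j) * q ^ (j + 1).choose 2 := by
  have hterm : ∀ m e, (n + 1).choose 2 + m.choose 2 = n * m + e →
      q ^ (n + 1).choose 2 * (qBinom q (2 * n) m * q ^ m.choose 2 * (q⁻¹ ^ n) ^ m) =
        qBinom q (2 * n) m * q ^ e := by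
    intro m e h
    have hpow : q ^ (n + 1).choose 2 * q ^ m.choose 2 = q ^ (n * m) * q ^ e := by
      rw [← pow_add, ← pow_add, h]
    rw [← pow_mul, inv_pow]
    field_simp
    linear_combination qBinom q (2 * n) m * hpow
  rw [mul_sum, show 2 * n + 1 = (n + 1) + n by omega, sum_range_add, ← sum_range_reflect]
  congr 1 <;> refine sum_congr rfl fun j hj => hterm _ _ ?_ <;>
    apply Nat.cast_injective (R := ℚ)
  · obtain ⟨d, hd⟩ := Nat.exists_eq_add_of_le (Nat.lt_succ_iff.1 (mem_range.1 hj))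
    rw [show n + 1 - 1 - j = d by omega, hd]
    push_cast [Nat.cast_choose_two]
    ring
  · push_cast [Nat.cast_choose_two]
    ring

theorem sum_qBinom_two_mul_eq_qPochPartial (hq : q ≠ 0) (n : ℕ) :
    ∑ j ∈ range (n + 1), qBinom q (2 * n) (n - j) * q ^ (j + 1).choose 2
        + ∑ j ∈ range n, qBinom q (2 * n) (n + 1 + j) * q ^ (j + 1).choose 2 =
      qPochPartial (-q) q n * qPochPartial (-1) q n := by
  rw [← pow_choose_two_mul_sum_range_two_mul hq, ← prod_one_add_mul_pow_eq_sum_qBinom,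
    pow_choose_two_mul_prod_range_two_mul hq]

end Field

section InfiniteProduct

variable {𝕜 : Type*} [NormedField 𝕜] {a q : 𝕜}

lemma one_sub_mul_pow_ne_zero (ha : ‖a‖ < 1) (hq : ‖q‖ ≤ 1) (n : ℕ) :
    1 - a * q ^ n ≠ 0 := by
  refine sub_ne_zero.2 fun h => (?_ : ¬ ‖a * q ^ n‖ < 1) ?_
  · simp [← h]
  · rw [norm_mul, norm_pow]
    exact mul_lt_one_of_nonneg_of_lt_one_left (norm_nonneg a) ha
      (pow_le_one₀ (norm_nonneg q) hq)

lemma summable_norm_mul_pow (hq : ‖q‖ < 1) : Summable fun n : ℕ => ‖a * q ^ n‖ := by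
  simpa [norm_mul, norm_pow] using
    (summable_geometric_of_lt_one (norm_nonneg q) hq).mul_left ‖a‖

lemma qPochPartial_ne_zero (hq : ‖q‖ < 1) (m : ℕ) : qPochPartial q q m ≠ 0 :=
  prod_ne_zero_iff.2 fun k _ => one_sub_mul_pow_ne_zero hq hq.le k

lemma qBinom_eq_div (hq : ‖q‖ < 1) {N m : ℕ} (h : m ≤ N) :
    qBinom q N m = qPochPartial q q N / (qPochPartial q q m * qPochPartial q q (N - m)) := by
  rw [eq_div_iff (mul_ne_zero (qPochPartial_ne_zero hq m) (qPochPartial_ne_zero hq (N - m))),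
    qBinom_mul_qPochPartial q h]

variable [CompleteSpace 𝕜]

lemma multipliable_one_sub_mul_pow (hq : ‖q‖ < 1) :
    Multipliable fun n : ℕ => 1 - a * q ^ n := by
  simpa [sub_eq_add_neg] using multipliable_one_add_of_summable (f := fun n => -(a * q ^ n))
    (by simpa using summable_norm_mul_pow hq)

lemma tprod_one_sub_mul_pow_ne_zero (ha : ‖a‖ < 1) (hq : ‖q‖ < 1) :
    ∏' n : ℕ, (1 - a * q ^ n) ≠ 0 := by
  simpa [sub_eq_add_neg] using
    tprod_one_add_ne_zero_of_summable (f := fun n => -(a * q ^ n))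
      (by simpa [← sub_eq_add_neg] using one_sub_mul_pow_ne_zero ha hq.le)
      (by simpa using summable_norm_mul_pow hq)

lemma tendsto_qPochPartial (hq : ‖q‖ < 1) :
    Tendsto (qPochPartial a q) atTop (𝓝 (∏' n : ℕ, (1 - a * q ^ n))) :=
  (multipliable_one_sub_mul_pow hq).hasProd.tendsto_prod_nat

theorem tendsto_qBinom (hq : ‖q‖ < 1) {m d : ℕ → ℕ} (hm : Tendsto m atTop atTop)
    (hd : Tendsto d atTop atTop) :
    Tendsto (fun n => qBinom q (m n + d n) (m n)) atTop
      (𝓝 (∏' n : ℕ, (1 - q * q ^ n))⁻¹) := by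
  have hP := tprod_one_sub_mul_pow_ne_zero hq hq
  have hQ : Tendsto (qPochPartial q q) atTop (𝓝 (∏' n : ℕ, (1 - q * q ^ n))) :=
    tendsto_qPochPartial hq
  have hlim := (hQ.comp (tendsto_atTop_mono (fun n => Nat.le_add_right (m n) (d n)) hm)).div
    ((hQ.comp hm).mul (hQ.comp hd)) (mul_ne_zero hP hP)
  rw [div_mul_cancel_left₀ hP] at hlim
  refine hlim.congr fun n => ?_
  simp [qBinom_eq_div hq (Nat.le_add_right (m n) (d n))]

end InfiniteProduct

section Bound

lemma norm_qBinom_le {R : Type*} [NormedCommRing R] [NormOneClass R] (q : R) (N m : ℕ) :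
    ‖qBinom q N m‖ ≤ qBinom ‖q‖ N m := by
  induction N generalizing m with
  | zero => cases m <;> simp
  | succ N ih =>
    rcases m with _ | m
    · simp
    rw [qBinom_succ_succ, qBinom_succ_succ]
    refine (norm_add_le _ _).trans (add_le_add ((norm_mul_le _ _).trans ?_) (ih m))
    exact mul_le_mul (norm_pow_le _ _) (ih _) (norm_nonneg _) (by positivity)

variable {r : ℝ}

lemma qPochPartial_self_nonneg (hr0 : 0 ≤ r) (hr1 : r ≤ 1) (m : ℕ) : 0 ≤ qPochPartial r r m :=
  prod_nonneg fun k _ => sub_nonneg.2 (mul_le_one₀ hr1 (pow_nonneg hr0 k) (pow_le_one₀ hr0 hr1))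

lemma antitone_qPochPartial_self (hr0 : 0 ≤ r) (hr1 : r ≤ 1) : Antitone (qPochPartial r r) :=
  antitone_nat_of_succ_le fun m => by
    rw [qPochPartial_succ]
    exact mul_le_of_le_one_right (qPochPartial_self_nonneg hr0 hr1 m)
      (sub_le_self _ (by positivity))

theorem qBinom_le_inv_tprod_sq (hr0 : 0 ≤ r) (hr1 : r < 1) (N m : ℕ) :
    qBinom r N m ≤ ((∏' n : ℕ, (1 - r * r ^ n)) ^ 2)⁻¹ := by
  have hr : ‖r‖ < 1 := by rwa [Real.norm_of_nonneg hr0]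
  have hanti := antitone_qPochPartial_self hr0 hr1.le
  have hlim := tendsto_qPochPartial (a := r) hr
  have hle : ∀ k, ∏' n : ℕ, (1 - r * r ^ n) ≤ qPochPartial r r k := hanti.le_of_tendsto hlim
  have hpos : 0 < ∏' n : ℕ, (1 - r * r ^ n) :=
    (ge_of_tendsto' hlim (qPochPartial_self_nonneg hr0 hr1.le)).lt_of_ne
      (tprod_one_sub_mul_pow_ne_zero hr hr).symm
  rcases le_or_gt m N with h | h
  · rw [qBinom_eq_div hr h, sq, ← one_div]
    refine div_le_div₀ zero_le_one ?_ (mul_pos hpos hpos)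
      (mul_le_mul (hle m) (hle _) hpos.le (qPochPartial_self_nonneg hr0 hr1.le m))
    simpa using hanti (Nat.zero_le N)
  · rw [qBinom_eq_zero_of_lt r h]
    positivity

end Bound

theorem tendsto_sum_range_mul {R : Type*} [NormedRing R] [CompleteSpace R]
    {g : ℕ → ℕ → R} {a : ℕ → R} {L : ℕ → ℕ} {B : ℝ} {c : R}
    (ha : Summable fun j => ‖a j‖) (hL : Tendsto L atTop atTop)
    (hgB : ∀ n j, ‖g n j‖ ≤ B) (hg : ∀ j, Tendsto (g · j) atTop (𝓝 c)) :
    Tendsto (fun n => ∑ j ∈ range (L n), g n j * a j) atTop (𝓝 (c * ∑' j, a j)) := by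
  refine .congr (fun n => (sum_eq_tsum_indicator (fun j => g n j * a j) _).symm) ?_
  rw [← ha.of_norm.tsum_mul_left]
  refine tendsto_tsum_of_dominated_convergence (ha.mul_left B) (fun j => ?_)
    (.of_forall fun n j => ?_)
  · refine ((hg j).mul_const (a j)).congr' ?_
    filter_upwards [hL.eventually_gt_atTop j] with n hn
    rw [Set.indicator_of_mem (by simpa using hn)]
  · exact norm_indicator_le_norm_self _ _ |>.trans <| (norm_mul_le _ _).trans <|
      mul_le_mul_of_nonneg_right (hgB n j) (norm_nonneg _)

section Complex

variable {q : ℂ}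

lemma qPoch_sq_sq_eq_mul (hq : ‖q‖ < 1) : qPoch (q ^ 2) (q ^ 2) = qPoch q q * qPoch (-q) q := by
  rw [qPoch, qPoch, qPoch,
    ← (multipliable_one_sub_mul_pow hq).tprod_mul (multipliable_one_sub_mul_pow hq)]
  exact tprod_congr fun n => by ring

lemma qPoch_neg_one (hq : ‖q‖ < 1) : qPoch (-1) q = 2 * qPoch (-q) q := by
  have hshift : (fun n : ℕ => 1 - -1 * q ^ (n + 1)) = fun n => 1 - -q * q ^ n :=
    funext fun n => by ring
  unfold qPoch
  rw [tprod_eq_zero_mul' (by rw [hshift]; exact multipliable_one_sub_mul_pow hq), hshift]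
  norm_num

lemma summable_norm_pow_choose_two (hq : ‖q‖ < 1) :
    Summable fun j : ℕ => ‖q ^ (j + 1).choose 2‖ := by
  refine (summable_geometric_of_lt_one (norm_nonneg q) hq).of_nonneg_of_le
    (fun _ => norm_nonneg _) fun j => ?_
  rw [norm_pow, succ_choose_two]
  exact pow_le_pow_of_le_one (norm_nonneg q) hq.le (Nat.le_add_left j _)

theorem tsum_pow_succ_choose_two_eq (hq : ‖q‖ < 1) :
    ∑' j : ℕ, q ^ (j + 1).choose 2 = qPoch q q * qPoch (-q) q ^ 2 := by
  rcases eq_or_ne q 0 with rfl | hq0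
  · rw [tsum_eq_single 0 fun j hj => zero_pow (by rw [succ_choose_two]; omega)]
    simp [qPoch]
  have hP : qPoch q q ≠ 0 := tprod_one_sub_mul_pow_ne_zero hq hq
  have hB N m := (norm_qBinom_le q N m).trans (qBinom_le_inv_tprod_sq (norm_nonneg q) hq N m)
  have hψ := summable_norm_pow_choose_two hq
  have hlow : Tendsto
      (fun n => ∑ j ∈ range (n + 1), qBinom q (2 * n) (n - j) * q ^ (j + 1).choose 2) atTop
      (𝓝 ((qPoch q q)⁻¹ * ∑' j : ℕ, q ^ (j + 1).choose 2)) := by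
    refine tendsto_sum_range_mul hψ (tendsto_add_atTop_nat 1) (fun n j => hB _ _) fun j =>
      (tendsto_qBinom hq (tendsto_sub_atTop_nat j) (tendsto_add_atTop_nat j)).congr' ?_
    filter_upwards [eventually_ge_atTop j] with n hn
    rw [show n - j + (n + j) = 2 * n by omega]
  have hhigh : Tendsto
      (fun n => ∑ j ∈ range n, qBinom q (2 * n) (n + 1 + j) * q ^ (j + 1).choose 2) atTop
      (𝓝 ((qPoch q q)⁻¹ * ∑' j : ℕ, q ^ (j + 1).choose 2)) := by
    refine tendsto_sum_range_mul hψ tendsto_id (fun n j => hB _ _) fun j =>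
      (tendsto_qBinom hq (tendsto_add_atTop_nat (1 + j))
        (tendsto_sub_atTop_nat (j + 1))).congr' ?_
    filter_upwards [eventually_gt_atTop j] with n hn
    rw [show n + (1 + j) + (n - (j + 1)) = 2 * n by omega, add_assoc]
  have hprod : Tendsto (fun n => qPochPartial (-q) q n * qPochPartial (-1) q n) atTop
      (𝓝 (qPoch (-q) q * qPoch (-1) q)) :=
    (tendsto_qPochPartial hq).mul (tendsto_qPochPartial hq)
  have heq := tendsto_nhds_unique
    ((hlow.add hhigh).congr (sum_qBinom_two_mul_eq_qPochPartial hq0)) hprod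
  rw [qPoch_neg_one hq] at heq
  field_simp at heq
  linear_combination heq / 2

end Complex

theorem stmt_2 (q : ℂ) (hq : ‖q‖ < 1) :
    ∑' n : ℕ, q ^ (n * (n + 1) / 2) = qPoch (q ^ 2) (q ^ 2) ^ 2 / qPoch q q := by
  have hP : qPoch q q ≠ 0 := tprod_one_sub_mul_pow_ne_zero hq hq
  have hexp (n : ℕ) : n * (n + 1) / 2 = (n + 1).choose 2 := by
    rw [Nat.choose_two_right, Nat.add_sub_cancel, mul_comm]
  simp_rw [hexp]
  rw [tsum_pow_succ_choose_two_eq hq, qPoch_sq_sq_eq_mul hq]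
  field_simp
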